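/- arXiv:1010.4988 — 2 statements merged into one kernel-verified Lean document; each statement's English description precedes it below -/
import Mathlib

section
/- Second-derivative bound for inf-convolutions of supersolutions: let ū be a nonnegative, nondecreasing, absolutely continuous viscosity supersolution of L*(u)=0 on (0,∞) which is k₀-Lipschitz on [0,x₁] with k₀ ≥ 1, let 0 < x₀ < x₁, and define v_n(x) = inf_{y∈[0,x₁]} ( ū(y) + n²(x−y)²/2 ). Then for every n with n² ≥ 4k₀/x₀ and every x̄ ∈ [x₀,x₁] at which v_n is twice differentiable, v_n''(x̄) ≤ 8(c+β)ū(x₁)/(σ²x₀²). -/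
/-!
`W(x) = n²x²/2 − v(x)` is a supremum of affine functions, hence convex. As `deriv v` is junk
wherever `v` is not differentiable, the expansion `v'(s) = v'(x̄) + q(s − x̄) + o(s − x̄)` is only
used where `W` is differentiable; those points are dense (a convex function is locally Lipschitz),
and convexity integrates the resulting bound on `W'` into the lower expansion
`v(z) ≥ v(x̄) + v'(x̄)(z − x̄) + (q − ε)(z − x̄)²/2` near `x̄`, where `q = v''(x̄)`.
If `ȳ` attains the infimum defining `v(x̄)`, then `u(y) ≥ v(y + x̄ − ȳ) − n²(x̄ − ȳ)²/2` transfers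
this to a lower 2-jet of `u` at `ȳ` with slope `v'(x̄) = n²(x̄ − ȳ) ≥ 0`, and monotonicity with the
Lipschitz bound give `x₀/2 ≤ ȳ ≤ x̄`. Touching `u` from below at `ȳ` by this quadratic minus a
large quartic, the supersolution inequality at `γ = 1` leaves `σ²ȳ²(q − ε)/2 ≤ (c + β)u(ȳ)`, since
every other term has a sign. If `ȳ = x₁` the transfer fails to the right of `ȳ`, but then
`x̄ = x₁` is a maximum of `v` from the left with `v'(x̄) = 0`, so `q ≤ 0`.
-/

open MeasureTheory Set Filter

/-- The operator `L_γ(u,f)(x)` from the paper: second-order integro-differential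
operator with drift/volatility controlled by `γ`, integral term with respect to the
Lebesgue–Stieltjes measure of the claim-size distribution `F`. -/
noncomputable def Lg (p β c r σ : ℝ) (F : StieltjesFunction ℝ)
    (γ : ℝ) (u f : ℝ → ℝ) (x : ℝ) : ℝ :=
  σ ^ 2 * γ ^ 2 * x ^ 2 * deriv (deriv f) x / 2 + (p + r * γ * x) * deriv f x
    - (c + β) * u x + β * ∫ α in Icc (0 : ℝ) x, u (x - α) ∂F.measure

/-- `L*(u,f)(x) = sup_{γ ∈ [0,1]} L_γ(u,f)(x)`. -/
noncomputable def Lstar (p β c r σ : ℝ) (F : StieltjesFunction ℝ)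
    (u f : ℝ → ℝ) (x : ℝ) : ℝ :=
  ⨆ γ : Icc (0 : ℝ) 1, Lg p β c r σ F (γ : ℝ) u f x

/-- `u` is a viscosity supersolution of `L*(u) = 0` at `x ∈ (0,∞)`. -/
def SupersolLAt (p β c r σ : ℝ) (F : StieltjesFunction ℝ) (u : ℝ → ℝ) (x : ℝ) : Prop :=
  ∀ φ : ℝ → ℝ, ContDiff ℝ 2 φ → (∀ y ∈ Ioi (0 : ℝ), u x - φ x ≤ u y - φ y) →
    Lstar p β c r σ F u φ x ≤ 0

open scoped Topology

theorem le_of_forall_pos_mul_sub_le {a b C : ℝ} (h : ∀ ε > 0, a * (b - ε) ≤ C) : a * b ≤ C :=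
  le_of_tendsto (x := 𝓝[>] 0) (((continuous_const.mul (continuous_const.sub continuous_id)
    ).tendsto' 0 _ (by simp)).mono_left nhdsWithin_le_nhds)
    (eventually_nhdsWithin_of_forall fun ε hε ↦ h ε hε)

theorem ConvexOn.exists_differentiableAt_mem_Ioo {W : ℝ → ℝ} (hW : ConvexOn ℝ univ W)
    {a b : ℝ} (hab : a < b) : ∃ s ∈ Ioo a b, DifferentiableAt ℝ W s := by
  obtain ⟨K, hK⟩ := ((hW.locallyLipschitzOn isOpen_univ).mono (subset_univ (Icc a b))
    ).exists_lipschitzOnWith_of_compact isCompact_Icc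
  have hae := (hK.mono Ioo_subset_Icc_self).ae_differentiableWithinAt (μ := volume)
    measurableSet_Ioo
  have : (ae (volume.restrict (Ioo a b))).NeBot := ae_neBot.2 (by simp [hab])
  obtain ⟨s, hs, hd⟩ := ((ae_restrict_mem measurableSet_Ioo).and hae).exists
  exact ⟨s, hs, hd.differentiableAt (Ioo_mem_nhds hs.1 hs.2)⟩

theorem ConvexOn.le_of_deriv_le {W B B' : ℝ → ℝ} {a b : ℝ} (hW : ConvexOn ℝ univ W)
    (hB : ∀ s, HasDerivAt B (B' s) s) (hB' : Continuous B') (ha : W a ≤ B a)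
    (hderiv : ∀ s ∈ Ioo a b, DifferentiableAt ℝ W s → deriv W s ≤ B' s) :
    ∀ z ∈ Icc a b, W z ≤ B z := by
  refine image_le_of_liminf_slope_right_le_deriv_boundary
    ((hW.continuousOn isOpen_univ).mono (subset_univ _)) ha
    (fun s _ ↦ (hB s).continuousAt.continuousWithinAt) (fun s _ ↦ (hB s).hasDerivWithinAt) ?_
  intro x hx r hr
  obtain ⟨l, hxl, hl⟩ := exists_Ico_subset_of_mem_nhds
    ((hB'.isOpen_preimage _ isOpen_Iio).mem_nhds hr) ⟨x + 1, by linarith⟩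
  obtain ⟨s, ⟨hxs, hsl⟩, hs⟩ := hW.exists_differentiableAt_mem_Ioo (lt_min hxl hx.2)
  have hslope : slope W x s < r := calc
    slope W x s ≤ deriv W s := hW.slope_le_deriv (mem_univ x) (mem_univ s) hxs hs
    _ ≤ B' s := hderiv s ⟨hx.1.trans_lt hxs, hsl.trans_le (min_le_right _ _)⟩ hs
    _ < r := hl ⟨hxs.le, hsl.trans_le (min_le_left _ _)⟩
  refine Eventually.frequently ?_
  filter_upwards [Ioo_mem_nhdsGT hxs] with z hz
  exact (hW.slope_mono (mem_univ x) ⟨mem_univ z, hz.1.ne'⟩ ⟨mem_univ s, hxs.ne'⟩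
    hz.2.le).trans_lt hslope

theorem hasDerivAt_quadratic (a b c x₀ s : ℝ) :
    HasDerivAt (fun t ↦ a + b * (t - x₀) + c / 2 * (t - x₀) ^ 2) (b + c * (s - x₀)) s := by
  have hd : DifferentiableAt ℝ (fun t ↦ a + b * (t - x₀) + c / 2 * (t - x₀) ^ 2) s := by
    fun_prop
  exact hd.hasDerivAt.congr_deriv (by simp (disch := fun_prop); ring)

section Semiconcave

variable {v : ℝ → ℝ} {N q x ε : ℝ}

theorem eventually_nhdsGE_lower_taylor (hW : ConvexOn ℝ univ fun x ↦ N * x ^ 2 / 2 - v x)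
    (hv' : HasDerivAt (deriv v) q x) (hε : 0 < ε) :
    ∀ᶠ z in 𝓝[≥] x, v x + deriv v x * (z - x) + (q - ε) / 2 * (z - x) ^ 2 ≤ v z := by
  obtain ⟨δ, hδ, hclose⟩ :=
    Metric.eventually_nhds_iff.1 ((hasDerivAt_iff_isLittleO.1 hv').bound hε)
  filter_upwards [Ico_mem_nhdsGE (show x < x + δ by linarith)] with z hz
  set d := deriv v x
  have key := hW.le_of_deriv_le (b := z)
    (hasDerivAt_quadratic (N * x ^ 2 / 2 - v x) (N * x - d) (N - q + ε) x) (by fun_prop)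
    (by simp) ?_ z ⟨hz.1, le_rfl⟩
  · linear_combination key
  intro s hs hWs
  have hvs : DifferentiableAt ℝ v s := by
    have e : v = fun y ↦ N * y ^ 2 / 2 - (N * y ^ 2 / 2 - v y) := by ext; ring
    rw [e]; fun_prop
  have hWs' : deriv (fun x ↦ N * x ^ 2 / 2 - v x) s = N * s - deriv v s := by
    simp (disch := fun_prop); ring
  have hsx : 0 < s - x := by linarith [hs.1]
  have h := hclose (show dist s x < δ by rw [Real.dist_eq, abs_of_pos hsx]; linarith [hs.2, hz.2])
  rw [Real.norm_eq_abs, Real.norm_eq_abs, abs_of_pos hsx, smul_eq_mul, abs_le] at h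
  rw [hWs']
  linarith [h.1]

theorem eventually_nhds_lower_taylor (hW : ConvexOn ℝ univ fun x ↦ N * x ^ 2 / 2 - v x)
    (hv' : HasDerivAt (deriv v) q x) (hε : 0 < ε) :
    ∀ᶠ z in 𝓝 x, v x + deriv v x * (z - x) + (q - ε) / 2 * (z - x) ^ 2 ≤ v z := by
  rw [← nhdsLE_sup_nhdsGE, eventually_sup]
  refine ⟨?_, eventually_nhdsGE_lower_taylor hW hv' hε⟩
  have hWneg : ConvexOn ℝ univ fun x ↦ N * x ^ 2 / 2 - v (-x) := by
    simpa [Function.comp_def] using hW.comp_linearMap (-LinearMap.id)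
  have hvneg' : HasDerivAt (deriv fun x ↦ v (-x)) q (-x) := by
    have h : HasDerivAt (deriv v) q (-(-x)) := by rwa [neg_neg]
    rw [funext fun y ↦ deriv_comp_neg v y]
    exact ((h.comp (-x) (hasDerivAt_neg (-x))).neg).congr_deriv (by ring)
  have hneg : Tendsto Neg.neg (𝓝[≤] x) (𝓝[≥] (-x)) := by
    simpa using tendsto_neg_nhdsLE_neg (a := -x)
  filter_upwards [hneg.eventually (eventually_nhdsGE_lower_taylor hWneg hvneg' hε)] with z hz
  simp only [neg_neg, deriv_comp_neg] at hz
  linear_combination hz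

end Semiconcave

noncomputable def infConv (u : ℝ → ℝ) (N L x : ℝ) : ℝ :=
  ⨅ y : Icc (0 : ℝ) L, (u y + N * (x - y) ^ 2 / 2)

section InfConv

variable {u : ℝ → ℝ} {N L x y : ℝ}

theorem infConv_le (hu : ContinuousOn u (Icc 0 L)) (hy : y ∈ Icc 0 L) :
    infConv u N L x ≤ u y + N * (x - y) ^ 2 / 2 :=
  ciInf_le (f := fun y : Icc (0 : ℝ) L ↦ u y + N * (x - y) ^ 2 / 2)
    (isCompact_range (continuousOn_iff_continuous_domRestrict.1 (hu.add
      (by fun_prop : ContinuousOn (fun y ↦ N * (x - y) ^ 2 / 2) (Icc 0 L))))).bddBelow ⟨y, hy⟩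

theorem exists_infConv_eq (hu : ContinuousOn u (Icc 0 L)) (hL : 0 ≤ L) (x : ℝ) :
    ∃ y ∈ Icc 0 L, infConv u N L x = u y + N * (x - y) ^ 2 / 2 := by
  obtain ⟨y, hy, hmin⟩ := isCompact_Icc.exists_isMinOn (nonempty_Icc.2 hL)
    (hu.add (by fun_prop : ContinuousOn (fun y ↦ N * (x - y) ^ 2 / 2) (Icc 0 L)))
  have : Nonempty (Icc (0 : ℝ) L) := ⟨⟨y, hy⟩⟩
  exact ⟨y, hy, le_antisymm (infConv_le hu hy) (le_ciInf fun z ↦ hmin z.2)⟩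

theorem convexOn_sq_sub_infConv (hu : ContinuousOn u (Icc 0 L)) (hL : 0 ≤ L) :
    ConvexOn ℝ univ fun x ↦ N * x ^ 2 / 2 - infConv u N L x := by
  refine ⟨convex_univ, fun x _ x' _ a b ha hb hab ↦ ?_⟩
  have : Nonempty (Icc (0 : ℝ) L) := ⟨⟨0, le_rfl, hL⟩⟩
  obtain rfl : b = 1 - a := by linarith
  have key : N * (a * x + (1 - a) * x') ^ 2 / 2 - (a * (N * x ^ 2 / 2 - infConv u N L x)
      + (1 - a) * (N * x' ^ 2 / 2 - infConv u N L x')) ≤ infConv u N L (a * x + (1 - a) * x') :=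
    le_ciInf fun y ↦ by
      nlinarith [mul_le_mul_of_nonneg_left (infConv_le (N := N) (x := x) hu y.2) ha,
        mul_le_mul_of_nonneg_left (infConv_le (N := N) (x := x') hu y.2) hb]
  simp only [smul_eq_mul]
  linarith

theorem deriv_infConv_eq (hu : ContinuousOn u (Icc 0 L)) (hy : y ∈ Icc 0 L)
    (hxy : infConv u N L x = u y + N * (x - y) ^ 2 / 2)
    (hd : DifferentiableAt ℝ (infConv u N L) x) : deriv (infConv u N L) x = N * (x - y) := by
  have hmin : IsLocalMin (fun z ↦ u y + N * (z - y) ^ 2 / 2 - infConv u N L z) x :=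
    Eventually.of_forall fun z ↦ by
      simp only [hxy, sub_self, sub_nonneg]
      exact infConv_le hu hy
  have h := hmin.deriv_eq_zero
  rw [deriv_fun_sub (by fun_prop) hd] at h
  simp (disch := fun_prop) at h
  linarith

theorem le_of_infConv_eq (hu : ContinuousOn u (Icc 0 L)) (hmono : MonotoneOn u (Icc 0 L))
    (hN : 0 < N) (hx : x ∈ Icc 0 L) (hy : y ∈ Icc 0 L)
    (hxy : infConv u N L x = u y + N * (x - y) ^ 2 / 2) : y ≤ x := by
  by_contra! hxy'
  have h1 : infConv u N L x ≤ u x := by simpa using infConv_le (N := N) (x := x) hu hx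
  have h2 : 0 < N * (x - y) ^ 2 := by
    have : x - y ≠ 0 := by linarith
    positivity
  linarith [hmono hx hy hxy'.le]

theorem mem_Icc_of_infConv_eq (hmono : MonotoneOn u (Icc 0 L)) {k x₀ : ℝ}
    (hLip : ∀ x ∈ Icc (0 : ℝ) L, ∀ y ∈ Icc (0 : ℝ) L, |u x - u y| ≤ k * |x - y|)
    (hN : 0 < N) (hx₀ : 0 ≤ x₀) (hk : 4 * k ≤ N * x₀) (hx : x ∈ Icc x₀ L) (hy : y ∈ Icc 0 L)
    (hxy : infConv u N L x = u y + N * (x - y) ^ 2 / 2) : y ∈ Icc (x₀ / 2) x := by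
  have hu : ContinuousOn u (Icc 0 L) := (LipschitzOnWith.of_dist_le' hLip).continuousOn
  have hx' : x ∈ Icc 0 L := ⟨hx₀.trans hx.1, hx.2⟩
  refine ⟨?_, le_of_infConv_eq hu hmono hN hx' hy hxy⟩
  by_contra! hy₀
  have hpos : 0 < x - y := by linarith [hx.1]
  have h1 : infConv u N L x ≤ u x := by simpa using infConv_le (N := N) (x := x) hu hx'
  have h2 := (le_abs_self _).trans (hLip x hx' y hy)
  rw [abs_of_pos hpos] at h2
  nlinarith [mul_pos (mul_pos hN hpos) (show 0 < x - y - x₀ / 2 by linarith [hx.1]),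
    mul_le_mul_of_nonneg_right hk hpos.le]

theorem eventually_lower_jet_of_infConv (hu : ContinuousOn u (Icc 0 L)) {d b : ℝ}
    (hy : y ∈ Ioo 0 L) (hxy : infConv u N L x = u y + N * (x - y) ^ 2 / 2)
    (hjet : ∀ᶠ z in 𝓝 x, infConv u N L x + d * (z - x) + b * (z - x) ^ 2 ≤ infConv u N L z) :
    ∀ᶠ z in 𝓝 y, u y + d * (z - y) + b * (z - y) ^ 2 ≤ u z := by
  have hshift : Tendsto (fun z ↦ z + (x - y)) (𝓝 y) (𝓝 x) := by
    simpa using (continuous_add_const (x - y)).tendsto y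
  filter_upwards [hshift.eventually hjet, Ioo_mem_nhds hy.1 hy.2] with z hz hzL
  have h := infConv_le (N := N) (x := z + (x - y)) hu (Ioo_subset_Icc_self hzL)
  rw [show z + (x - y) - x = z - y by ring] at hz
  rw [show z + (x - y) - z = x - y by ring] at h
  linarith

theorem nonpos_of_lower_jet_at_right_endpoint (hu : ContinuousOn u (Icc 0 L))
    (hmono : MonotoneOn u (Icc 0 L)) (hL : 0 < L) {d b : ℝ} (hd : d ≤ 0)
    (hLL : infConv u N L L = u L)
    (hjet : ∀ᶠ z in 𝓝 L, infConv u N L L + d * (z - L) + b * (z - L) ^ 2 ≤ infConv u N L z) :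
    b ≤ 0 := by
  by_contra! hb
  obtain ⟨z, hz, hzL⟩ := ((hjet.filter_mono nhdsWithin_le_nhds).and (Ioo_mem_nhdsLT hL)).exists
  have h1 : infConv u N L z ≤ u z := by
    simpa using infConv_le (N := N) (x := z) hu (Ioo_subset_Icc_self hzL)
  have h2 : u z ≤ u L := hmono (Ioo_subset_Icc_self hzL) (right_mem_Icc.2 hL.le) hzL.2.le
  have h3 : 0 < b * (z - L) ^ 2 := mul_pos hb (by nlinarith [hzL.2])
  nlinarith [mul_nonneg_of_nonpos_of_nonpos hd (sub_nonpos.2 hzL.2.le)]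

end InfConv

theorem exists_le_mul_pow_four (a d b : ℝ) {ρ : ℝ} (hρ : 0 < ρ) :
    ∃ K ≥ 0, ∀ t : ℝ, ρ ≤ |t| → a + d * t + b * t ^ 2 ≤ K * t ^ 4 := by
  refine ⟨(|a| + |d| * ρ + |b| * ρ ^ 2) / ρ ^ 4, by positivity, fun t ht ↦ ?_⟩
  have ht4 : t ^ 4 = |t| ^ 4 := by rw [pow_abs, abs_of_nonneg (by positivity)]
  rw [div_mul_eq_mul_div, le_div_iff₀ (by positivity), ht4, ← sq_abs t]
  have hs : 0 ≤ |t| := abs_nonneg t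
  have hdt : d * t ≤ |d| * |t| := (le_abs_self _).trans (abs_mul d t).le
  have hρ4 : 0 ≤ ρ ^ 4 := by positivity
  nlinarith [mul_le_mul_of_nonneg_right (le_abs_self a) hρ4,
    mul_le_mul_of_nonneg_right hdt hρ4,
    mul_le_mul_of_nonneg_right (le_abs_self b) (mul_nonneg (sq_nonneg |t|) hρ4),
    mul_le_mul_of_nonneg_left (pow_le_pow_left₀ hρ.le ht 4) (abs_nonneg a),
    mul_le_mul_of_nonneg_left (mul_le_mul_of_nonneg_left (pow_le_pow_left₀ hρ.le ht 3) hs)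
      (mul_nonneg (abs_nonneg d) hρ.le),
    mul_le_mul_of_nonneg_left (mul_le_mul_of_nonneg_left (pow_le_pow_left₀ hρ.le ht 2)
      (sq_nonneg |t|)) (mul_nonneg (abs_nonneg b) (sq_nonneg ρ))]

theorem exists_contDiff_minorant_of_lower_jet {u : ℝ → ℝ} {s : Set ℝ} {y d b : ℝ}
    (hjet : ∀ᶠ z in 𝓝 y, u y + d * (z - y) + b * (z - y) ^ 2 ≤ u z) (hnn : ∀ z ∈ s, 0 ≤ u z) :
    ∃ φ : ℝ → ℝ, ContDiff ℝ 2 φ ∧ φ y = u y ∧ deriv φ y = d ∧ deriv (deriv φ) y = 2 * b ∧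
      ∀ z ∈ s, φ z ≤ u z := by
  obtain ⟨ρ, hρ, hnear⟩ := Metric.eventually_nhds_iff.1 hjet
  obtain ⟨K, hK, hfar⟩ := exists_le_mul_pow_four (u y) d b hρ
  have hφ' : deriv (fun z ↦ u y + d * (z - y) + b * (z - y) ^ 2 - K * (z - y) ^ 4) =
      fun z ↦ d + 2 * b * (z - y) - 4 * K * (z - y) ^ 3 := by
    funext z; simp (disch := fun_prop); ring
  refine ⟨fun z ↦ u y + d * (z - y) + b * (z - y) ^ 2 - K * (z - y) ^ 4, by fun_prop,
    by simp, by simp [hφ'], by rw [hφ']; simp (disch := fun_prop), fun z hz ↦ ?_⟩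
  rcases lt_or_ge (dist z y) ρ with hzy | hzy
  · nlinarith [hnear hzy, mul_nonneg hK (by positivity : (0 : ℝ) ≤ (z - y) ^ 4)]
  · nlinarith [hfar (z - y) hzy, hnn z hz]

theorem Lg_le_Lstar (p β c r σ : ℝ) (F : StieltjesFunction ℝ) (u f : ℝ → ℝ) (x : ℝ) {γ : ℝ}
    (hγ : γ ∈ Icc (0 : ℝ) 1) : Lg p β c r σ F γ u f x ≤ Lstar p β c r σ F u f x :=
  le_ciSup (f := fun γ : Icc (0 : ℝ) 1 ↦ Lg p β c r σ F γ u f x)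
    (isCompact_range (by unfold Lg; fun_prop)).bddAbove ⟨γ, hγ⟩

theorem SupersolLAt.sq_mul_le_of_lower_jet {p β c r σ : ℝ} {F : StieltjesFunction ℝ}
    {u : ℝ → ℝ} {y d b : ℝ} (hsuper : SupersolLAt p β c r σ F u y) (hp : 0 ≤ p) (hr : 0 ≤ r)
    (hβ : 0 ≤ β) (hnn : ∀ z ∈ Ici (0 : ℝ), 0 ≤ u z) (hy : 0 ≤ y) (hd : 0 ≤ d)
    (hjet : ∀ᶠ z in 𝓝 y, u y + d * (z - y) + b * (z - y) ^ 2 ≤ u z) :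
    σ ^ 2 * y ^ 2 * b ≤ (c + β) * u y := by
  obtain ⟨φ, hφ, hφy, hφ', hφ'', hle⟩ :=
    exists_contDiff_minorant_of_lower_jet (s := Ioi 0) hjet fun z hz ↦ hnn z (mem_Ioi.1 hz).le
  have hL := (Lg_le_Lstar p β c r σ F u φ y ⟨zero_le_one, le_rfl⟩).trans
    (hsuper φ hφ fun z hz ↦ by linarith [hle z hz])
  have hI : 0 ≤ ∫ α in Icc 0 y, u (y - α) ∂F.measure :=
    setIntegral_nonneg measurableSet_Icc fun α hα ↦ hnn _ (sub_nonneg.2 hα.2)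
  simp only [Lg, hφ', hφ''] at hL
  nlinarith [mul_nonneg (add_nonneg hp (mul_nonneg hr hy)) hd, mul_nonneg hβ hI]

theorem inf_convolution_second_derivative_bound_general
    (p β c r σ : ℝ) (hp : 0 < p) (hβ : 0 < β) (hr : 0 < r) (hrc : r < c) (hσ : 0 < σ)
    (F : StieltjesFunction ℝ)
    (u : ℝ → ℝ)
    (hnn : ∀ x ∈ Ici (0 : ℝ), 0 ≤ u x)
    (hmono : MonotoneOn u (Ici 0))
    (hsuper : ∀ x ∈ Ioi (0 : ℝ), SupersolLAt p β c r σ F u x)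
    (x₀ x₁ : ℝ) (hx₀ : 0 < x₀) (hx01 : x₀ < x₁)
    (k₀ : ℝ) (hk₀ : 1 ≤ k₀)
    (hLip : ∀ x ∈ Icc (0 : ℝ) x₁, ∀ y ∈ Icc (0 : ℝ) x₁, |u x - u y| ≤ k₀ * |x - y|)
    (n : ℕ) (hn : 4 * k₀ / x₀ ≤ (n : ℝ) ^ 2)
    (v : ℝ → ℝ)
    (hv : ∀ x : ℝ, v x = ⨅ y : Icc (0 : ℝ) x₁, (u (y : ℝ) + (n : ℝ) ^ 2 * (x - (y : ℝ)) ^ 2 / 2))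
    (xb : ℝ) (hxb : xb ∈ Icc x₀ x₁)
    (hd1 : DifferentiableAt ℝ v xb) (hd2 : DifferentiableAt ℝ (deriv v) xb) :
    deriv (deriv v) xb ≤ 8 * (c + β) * u x₁ / (σ ^ 2 * x₀ ^ 2) := by
  set N : ℝ := (n : ℝ) ^ 2
  have hN : 0 < N := (div_pos (by linarith) hx₀).trans_le hn
  have hu : ContinuousOn u (Icc 0 x₁) := (LipschitzOnWith.of_dist_le' hLip).continuousOn
  have hmono' : MonotoneOn u (Icc 0 x₁) := hmono.mono Icc_subset_Ici_self
  obtain rfl : v = infConv u N x₁ := funext hv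
  set q := deriv (deriv (infConv u N x₁)) xb
  obtain ⟨y, hy, hvy⟩ := exists_infConv_eq hu (hx₀.trans hx01).le xb
  obtain ⟨hy₀, hyxb⟩ := mem_Icc_of_infConv_eq hmono' hLip hN hx₀.le ((div_le_iff₀ hx₀).1 hn)
    hxb hy hvy
  have hd := deriv_infConv_eq hu hy hvy hd1
  have hC : 0 ≤ (c + β) * u x₁ := mul_nonneg (by linarith) (hnn x₁ (mem_Ici.2 (by linarith)))
  have hkey : ∀ ε > 0, σ ^ 2 * y ^ 2 / 2 * (q - ε) ≤ (c + β) * u x₁ := by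
    intro ε hε
    have hT := eventually_nhds_lower_taylor (convexOn_sq_sub_infConv hu (by linarith))
      hd2.hasDerivAt hε
    rcases hy.2.lt_or_eq with hyx₁ | hyx₁
    · calc σ ^ 2 * y ^ 2 / 2 * (q - ε) = σ ^ 2 * y ^ 2 * ((q - ε) / 2) := by ring
        _ ≤ (c + β) * u y := (hsuper y (mem_Ioi.2 (by linarith))).sq_mul_le_of_lower_jet hp.le
            hr.le hβ.le hnn (by linarith) (hd ▸ mul_nonneg hN.le (sub_nonneg.2 hyxb))
            (eventually_lower_jet_of_infConv hu ⟨by linarith, hyx₁⟩ hvy hT)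
        _ ≤ (c + β) * u x₁ := mul_le_mul_of_nonneg_left
            (hmono' hy (right_mem_Icc.2 (hy.1.trans hy.2)) hyx₁.le) (by linarith)
    · subst hyx₁
      obtain rfl : xb = y := le_antisymm hxb.2 hyxb
      have hb := nonpos_of_lower_jet_at_right_endpoint hu hmono' (by linarith) (by simp [hd])
        (by simpa using hvy) hT
      exact (mul_nonpos_of_nonneg_of_nonpos (by positivity) (by linarith)).trans hC
  have hq := le_of_forall_pos_mul_sub_le hkey
  rw [le_div_iff₀ (by positivity)]
  rcases le_or_gt q 0 with hq0 | hq0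
  · nlinarith [mul_nonneg (sq_nonneg σ) (sq_nonneg x₀)]
  · have hx₀y : x₀ ^ 2 ≤ 4 * y ^ 2 := by nlinarith
    nlinarith [mul_le_mul_of_nonneg_left hx₀y (mul_nonneg hq0.le (sq_nonneg σ))]

/-- **Second-derivative bound for inf-convolutions of supersolutions** (from the proof of
Proposition 3.1): if `u` is a nonnegative, nondecreasing, absolutely continuous viscosity
supersolution of `L*(u)=0` on `(0,∞)` which is `k₀`-Lipschitz on `[0,x₁]` (`k₀ ≥ 1`),
`0 < x₀ < x₁`, `n² ≥ 4k₀/x₀`, and `v` is the inf-convolution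
`v x = inf_{y ∈ [0,x₁]} (u y + n²(x-y)²/2)`, then at every point `x̄ ∈ [x₀,x₁]` where `v`
is twice differentiable, `v''(x̄) ≤ 8(c+β)u(x₁)/(σ²x₀²)`. -/
theorem inf_convolution_second_derivative_bound
    (p β c r σ : ℝ) (hp : 0 < p) (hβ : 0 < β) (hr : 0 < r) (hrc : r < c) (hσ : 0 < σ)
    (F : StieltjesFunction ℝ)
    (hF01 : ∀ x : ℝ, F x ∈ Icc (0 : ℝ) 1)
    (hF0 : ∀ x : ℝ, x ≤ 0 → F x = 0)
    (hF1 : Filter.Tendsto (⇑F) Filter.atTop (nhds 1))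
    (hFmean : IntegrableOn id (Ici (0 : ℝ)) F.measure)
    (u : ℝ → ℝ)
    (hnn : ∀ x ∈ Ici (0 : ℝ), 0 ≤ u x)
    (hmono : MonotoneOn u (Ici 0))
    (hAC : ∃ g : ℝ → ℝ, LocallyIntegrableOn g (Ici 0) volume ∧
      ∀ x ∈ Ici (0 : ℝ), u x = u 0 + ∫ t in (0 : ℝ)..x, g t)
    (hsuper : ∀ x ∈ Ioi (0 : ℝ), SupersolLAt p β c r σ F u x)
    (x₀ x₁ : ℝ) (hx₀ : 0 < x₀) (hx01 : x₀ < x₁)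
    (k₀ : ℝ) (hk₀ : 1 ≤ k₀)
    (hLip : ∀ x ∈ Icc (0 : ℝ) x₁, ∀ y ∈ Icc (0 : ℝ) x₁, |u x - u y| ≤ k₀ * |x - y|)
    (n : ℕ) (hn : 4 * k₀ / x₀ ≤ (n : ℝ) ^ 2)
    (v : ℝ → ℝ)
    (hv : ∀ x : ℝ, v x = ⨅ y : Icc (0 : ℝ) x₁, (u (y : ℝ) + (n : ℝ) ^ 2 * (x - (y : ℝ)) ^ 2 / 2))
    (xb : ℝ) (hxb : xb ∈ Icc x₀ x₁)
    (hd1 : DifferentiableAt ℝ v xb) (hd2 : DifferentiableAt ℝ (deriv v) xb) :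
    deriv (deriv v) xb ≤ 8 * (c + β) * u x₁ / (σ ^ 2 * x₀ ^ 2) :=
  inf_convolution_second_derivative_bound_general p β c r σ hp hβ hr hrc hσ F u hnn hmono hsuper x₀
    x₁ hx₀ hx01 k₀ hk₀ hLip n hn v hv xb hxb hd1 hd2
end

section
/- Linear tail estimate: let y ≥ p/(c−r) and let u:[0,∞)→ℝ be continuous and nondecreasing with u(y) ≥ y and u(x) = u(y) + (x−y) for all x ≥ y (extend u by u(x)=0 for x<0). Then for every x > y and every γ ∈ [0,1], (p+rγx) − (c+β)u(x) + β∫₀ˣ u(x−α)dF(α) ≤ p + (r−c)y ≤ 0; in particular, since u is affine with slope 1 on (y,∞), L_γ(u)(x) ≤ 0 for all x>y and γ∈[0,1]. -/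
/-!
On `(y, ∞)` the function `u` is affine with slope one, so `u'' = 0`, `u' = 1`, and `L_γ(u)(x)`
is the zeroth-order expression. As `u` is nondecreasing and `F` puts mass at most one on
`[0, x]`, the integral term is at most `u x`; with `rγx ≤ rx ≤ r u(x)` and `u(x) ≥ x > y`
the expression is at most `p + (r - c) u(x) ≤ p + (r - c) y`, which is nonpositive exactly
because `y ≥ p / (c - r)`.
-/

open MeasureTheory Set Filter

theorem StieltjesFunction.measure_Icc_le_one (F : StieltjesFunction ℝ)
    (hF01 : ∀ x, F x ∈ Icc (0 : ℝ) 1) (a b : ℝ) : F.measure (Icc a b) ≤ 1 :=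
  calc F.measure (Icc a b) ≤ F.measure (Ioc (a - 1) b) :=
        measure_mono (Icc_subset_Ioc (by linarith) le_rfl)
    _ = ENNReal.ofReal (F b - F (a - 1)) := F.measure_Ioc _ _
    _ ≤ 1 := ENNReal.ofReal_le_one.mpr (by linarith [(hF01 b).2, (hF01 (a - 1)).1])

theorem setIntegral_Icc_sub_le_of_monotoneOn {μ : Measure ℝ} [IsFiniteMeasureOnCompacts μ]
    {u : ℝ → ℝ} {x : ℝ} (hmono : MonotoneOn u (Ici 0)) (hx : 0 ≤ x) (hux : 0 ≤ u x)
    (hμ : μ (Icc 0 x) ≤ 1) : ∫ α in Icc 0 x, u (x - α) ∂μ ≤ u x := by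
  have hanti : AntitoneOn (fun α => u (x - α)) (Icc 0 x) := fun a ha b hb hab =>
    hmono (sub_nonneg.mpr hb.2) (sub_nonneg.mpr ha.2) (by linarith)
  calc ∫ α in Icc 0 x, u (x - α) ∂μ ≤ ∫ _ in Icc 0 x, u x ∂μ :=
        setIntegral_mono_on (hanti.integrableOn_isCompact isCompact_Icc)
          (integrableOn_const (hμ.trans_lt ENNReal.one_lt_top).ne) measurableSet_Icc
          fun α hα => by simpa using hanti ⟨le_rfl, hx⟩ hα hα.1
    _ = μ.real (Icc 0 x) * u x := by rw [setIntegral_const, smul_eq_mul]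
    _ ≤ u x :=
      mul_le_of_le_one_left hux (ENNReal.toReal_le_of_le_ofReal zero_le_one (by simpa using hμ))

theorem deriv_eq_one_of_forall_ge {u : ℝ → ℝ} {y x : ℝ}
    (haff : ∀ z ≥ y, u z = u y + (z - y)) (hx : y < x) : deriv u x = 1 := by
  have heq : u =ᶠ[nhds x] fun z => u y + (z - y) :=
    eventually_of_mem (Ioi_mem_nhds hx) fun z hz => haff z (le_of_lt hz)
  simp [heq.deriv_eq]

theorem deriv_deriv_eq_zero_of_forall_ge {u : ℝ → ℝ} {y x : ℝ}
    (haff : ∀ z ≥ y, u z = u y + (z - y)) (hx : y < x) : deriv (deriv u) x = 0 := by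
  have heq : deriv u =ᶠ[nhds x] fun _ => 1 :=
    eventually_of_mem (Ioi_mem_nhds hx) fun z hz => deriv_eq_one_of_forall_ge haff hz
  simp [heq.deriv_eq]

theorem linear_tail_estimate_general
    (p β c r σ : ℝ) (hp : 0 < p) (hβ : 0 < β) (hr : 0 < r) (hrc : r < c)
    (F : StieltjesFunction ℝ)
    (hF01 : ∀ x : ℝ, F x ∈ Icc (0 : ℝ) 1)
    (y : ℝ) (hy : p / (c - r) ≤ y)
    (u : ℝ → ℝ)
    (hmono : MonotoneOn u (Ici 0))
    (huy : y ≤ u y) (haff : ∀ x ≥ y, u x = u y + (x - y)) :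
    ∀ x : ℝ, y < x → ∀ γ ∈ Icc (0 : ℝ) 1,
      ((p + r * γ * x) - (c + β) * u x
          + β * ∫ α in Icc (0 : ℝ) x, u (x - α) ∂F.measure ≤ p + (r - c) * y) ∧
      p + (r - c) * y ≤ 0 ∧
      Lg p β c r σ F γ u u x ≤ 0 := by
  intro x hx γ hγ
  have hcr : 0 < c - r := sub_pos.mpr hrc
  have hx0 : 0 < x := ((div_pos hp hcr).trans_le hy).trans hx
  have hxu : x ≤ u x := by linarith [haff x hx.le]
  have hint : ∫ α in Icc 0 x, u (x - α) ∂F.measure ≤ u x :=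
    setIntegral_Icc_sub_le_of_monotoneOn hmono hx0.le (by linarith)
      (F.measure_Icc_le_one hF01 0 x)
  have hdrift : (p + r * γ * x) - (c + β) * u x
      + β * ∫ α in Icc (0 : ℝ) x, u (x - α) ∂F.measure ≤ p + (r - c) * y := by
    nlinarith [mul_nonneg (mul_nonneg hr.le (sub_nonneg.mpr hγ.2)) hx0.le,
      mul_nonneg hβ.le (sub_nonneg.mpr hint), mul_nonneg hr.le (sub_nonneg.mpr hxu),
      mul_nonneg hcr.le (sub_nonneg.mpr (hx.le.trans hxu))]
  have hneg : p + (r - c) * y ≤ 0 := by nlinarith [(div_le_iff₀ hcr).mp hy]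
  refine ⟨hdrift, hneg, ?_⟩
  rw [Lg, deriv_eq_one_of_forall_ge haff hx, deriv_deriv_eq_zero_of_forall_ge haff hx]
  linarith

/-- **Linear tail estimate** (from the proof of Lemma A.4(d)): if `y ≥ p/(c-r)` and `u`
is continuous, nondecreasing on `[0,∞)` with `u y ≥ y` and affine with slope one on
`[y,∞)`, then for every `x > y` and `γ ∈ [0,1]`,
`(p + rγx) - (c+β)u(x) + β∫₀ˣ u(x-α)dF(α) ≤ p + (r-c)y ≤ 0`; in particular
`L_γ(u)(x) ≤ 0` for all `x > y`. -/
theorem linear_tail_estimate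
    (p β c r σ : ℝ) (hp : 0 < p) (hβ : 0 < β) (hr : 0 < r) (hrc : r < c) (hσ : 0 < σ)
    (F : StieltjesFunction ℝ)
    (hF01 : ∀ x : ℝ, F x ∈ Icc (0 : ℝ) 1)
    (hF0 : ∀ x : ℝ, x ≤ 0 → F x = 0)
    (hF1 : Tendsto (⇑F) atTop (nhds 1))
    (hFmean : IntegrableOn id (Ici (0 : ℝ)) F.measure)
    (y : ℝ) (hy : p / (c - r) ≤ y)
    (u : ℝ → ℝ)
    (hcont : ContinuousOn u (Ici 0)) (hmono : MonotoneOn u (Ici 0))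
    (huy : y ≤ u y) (haff : ∀ x ≥ y, u x = u y + (x - y)) :
    ∀ x : ℝ, y < x → ∀ γ ∈ Icc (0 : ℝ) 1,
      ((p + r * γ * x) - (c + β) * u x
          + β * ∫ α in Icc (0 : ℝ) x, u (x - α) ∂F.measure ≤ p + (r - c) * y) ∧
      p + (r - c) * y ≤ 0 ∧
      Lg p β c r σ F γ u u x ≤ 0 :=
  linear_tail_estimate_general p β c r σ hp hβ hr hrc F hF01 y hy u hmono huy haff
end
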